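/- arXiv:1912.08561 — 5 statements merged into one kernel-verified Lean document; each statement's English description precedes it below -/
import Mathlib

section
/- Let X be a real inner product space, S a finite set of points in X with a ∈ conv S, and k a positive integer. Then there exist points x₁,…,x_k ∈ S (repetitions allowed) such that ‖a − (1/k)∑ᵢ xᵢ‖ ≤ diam(S)/√k. -/
open Finset RealInnerProductSpace

lemma maurey_aux {X : Type*} [NormedAddCommGroup X] [InnerProductSpace ℝ X]
    (S : Finset X) (a : X) (w : X → ℝ) (hw0 : ∀ y ∈ S, 0 ≤ w y)
    (hw1 : ∑ y ∈ S, w y = 1) (hwa : ∑ y ∈ S, w y • y = a) :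
    ∀ k : ℕ, 0 < k → ∃ x : Fin k → X, (∀ i, x i ∈ S) ∧
      ‖a - (k : ℝ)⁻¹ • ∑ i, x i‖ ^ 2 ≤ (Metric.diam (S : Set X)) ^ 2 / k := by
  have hane : a ∈ convexHull ℝ (S : Set X) := by
    rw [Finset.convexHull_eq]
    exact ⟨w, hw0, hw1, by rw [Finset.centerMass_eq_of_sum_1 _ _ hw1]; simpa using hwa⟩
  have hdist : ∀ s ∈ S, ‖a - s‖ ≤ Metric.diam (S : Set X) := by
    intro s hs
    have hb : Bornology.IsBounded (convexHull ℝ (S : Set X)) :=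
      isBounded_convexHull.mpr S.finite_toSet.isBounded
    have := Metric.dist_le_diam_of_mem hb hane (subset_convexHull ℝ (S : Set X) hs)
    rwa [convexHull_diam, dist_eq_norm] at this
  have hD : 0 ≤ Metric.diam (S : Set X) := Metric.diam_nonneg
  set D := Metric.diam (S : Set X) with hDdef
  have hdist2 : ∀ s ∈ S, ‖a - s‖ ^ 2 ≤ D ^ 2 := fun s hs =>
    pow_le_pow_left₀ (norm_nonneg _) (hdist s hs) 2
  -- S is nonempty
  have hSne : ∃ s, s ∈ S := by
    by_contra h
    push_neg at h
    have : S = ∅ := Finset.eq_empty_of_forall_notMem h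
    rw [this] at hane
    simp at hane
  -- key step: for any e, there is s ∈ S with ⟪e, a - s⟫ ≤ 0
  have hkey : ∀ e : X, ∃ s ∈ S, ⟪e, a - s⟫ ≤ 0 := by
    intro e
    have hsum0 : ∑ y ∈ S, w y • (a - y) = 0 := by
      simp only [smul_sub, Finset.sum_sub_distrib, ← Finset.sum_smul, hw1, hwa, one_smul,
        sub_self]
    have hinner0 : ∑ y ∈ S, w y * ⟪e, a - y⟫ = 0 := by
      have := congrArg (fun z => ⟪e, z⟫) hsum0
      simpa [inner_sum, real_inner_smul_right] using this
    by_contra h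
    push_neg at h
    have hz : ∀ y ∈ S, w y * ⟪e, a - y⟫ = 0 :=
      (Finset.sum_eq_zero_iff_of_nonneg (fun y hy =>
        mul_nonneg (hw0 y hy) (le_of_lt (h y hy)))).mp hinner0
    have hw0' : ∀ y ∈ S, w y = 0 := by
      intro y hy
      rcases mul_eq_zero.mp (hz y hy) with h' | h'
      · exact h'
      · exact absurd h' (ne_of_gt (h y hy))
    rw [Finset.sum_eq_zero hw0'] at hw1
    norm_num at hw1
  intro k
  induction k with
  | zero => omega
  | succ k ih =>
    intro _
    rcases Nat.eq_zero_or_pos k with hk0 | hk0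
    · -- base case k+1 = 1
      subst hk0
      obtain ⟨s, hs⟩ := hSne
      refine ⟨fun _ => s, fun _ => hs, ?_⟩
      simpa using hdist2 s hs
    · obtain ⟨x, hxS, hx⟩ := ih hk0
      have hk0' : (k : ℝ) ≠ 0 := Nat.cast_ne_zero.mpr hk0.ne'
      have hk1' : (k : ℝ) + 1 ≠ 0 := by positivity
      set b := (k : ℝ)⁻¹ • ∑ i, x i with hbdef
      obtain ⟨s, hs, hip⟩ := hkey (a - b)
      set c : ℝ := k / (k + 1) with hcdef
      set d : ℝ := 1 / (k + 1) with hddef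
      have hc0 : 0 ≤ c := by positivity
      have hd0 : 0 ≤ d := by positivity
      refine ⟨Fin.snoc x s, ?_, ?_⟩
      · intro i
        refine Fin.lastCases ?_ ?_ i
        · simpa using hs
        · intro j; simpa using hxS j
      · have hsum : ∑ i, Fin.snoc x s i = ∑ i, x i + s := by
          rw [Fin.sum_univ_castSucc]
          simp
        have hcast : ((k + 1 : ℕ) : ℝ) = (k : ℝ) + 1 := by push_cast; ring
        have hv : a - ((k + 1 : ℕ) : ℝ)⁻¹ • ∑ i, Fin.snoc x s i
            = c • (a - b) + d • (a - s) := by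
          rw [hsum, hcast]
          have h1 : c • (a - b) + d • (a - s) = (c + d) • a - (c • b + d • s) := by
            rw [add_smul, smul_sub, smul_sub]; abel
          have hcd : c + d = 1 := by rw [hcdef, hddef]; field_simp
          have hcb : c • b = ((k : ℝ) + 1)⁻¹ • ∑ i, x i := by
            rw [hbdef, smul_smul]
            congr 1
            rw [hcdef]
            field_simp
          have hds : d • s = ((k : ℝ) + 1)⁻¹ • s := by
            rw [hddef, one_div]
          rw [h1, hcd, one_smul, hcb, hds, smul_add]
        rw [hv, norm_add_sq_real]
        have hi2 : ⟪c • (a - b), d • (a - s)⟫ = c * (d * ⟪a - b, a - s⟫) := by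
          rw [real_inner_smul_left, real_inner_smul_right]
        have hns1 : ‖c • (a - b)‖ ^ 2 = c ^ 2 * ‖a - b‖ ^ 2 := by
          rw [norm_smul, Real.norm_eq_abs, abs_of_nonneg hc0, mul_pow]
        have hns2 : ‖d • (a - s)‖ ^ 2 = d ^ 2 * ‖a - s‖ ^ 2 := by
          rw [norm_smul, Real.norm_eq_abs, abs_of_nonneg hd0, mul_pow]
        rw [hi2, hns1, hns2]
        have hb2 : ‖a - b‖ ^ 2 ≤ D ^ 2 / k := hx
        have hs2 : ‖a - s‖ ^ 2 ≤ D ^ 2 := hdist2 s hs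
        have hcross : 2 * (c * (d * ⟪a - b, a - s⟫)) ≤ 0 := by
          have := mul_nonneg hc0 hd0
          nlinarith
        have hmain : c ^ 2 * (D ^ 2 / k) + d ^ 2 * D ^ 2 = D ^ 2 / ((k : ℝ) + 1) := by
          rw [hcdef, hddef]
          field_simp
        have : c ^ 2 * ‖a - b‖ ^ 2 + d ^ 2 * ‖a - s‖ ^ 2 ≤ D ^ 2 / ((k : ℝ) + 1) := by
          rw [← hmain]
          gcongr
        rw [hcast]
        linarith

/-- Maurey's lemma (approximate Carathéodory) in a real inner product space:
any point of the convex hull of a finite set `S` is within `diam S / √k` of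
an average of `k` points of `S` (repetitions allowed). -/
theorem maurey_hilbert {X : Type*} [NormedAddCommGroup X] [InnerProductSpace ℝ X]
    (S : Finset X) (a : X) (ha : a ∈ convexHull ℝ (S : Set X)) (k : ℕ) (hk : 0 < k) :
    ∃ x : Fin k → X, (∀ i, x i ∈ S) ∧
      ‖a - (k : ℝ)⁻¹ • ∑ i, x i‖ ≤ Metric.diam (S : Set X) / Real.sqrt k := by
  rw [Finset.convexHull_eq] at ha
  obtain ⟨w, hw0, hw1, hwc⟩ := ha
  have hwa : ∑ y ∈ S, w y • y = a := by
    rw [← hwc, Finset.centerMass_eq_of_sum_1 _ _ hw1]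
    simp
  obtain ⟨x, hxS, hx⟩ := maurey_aux S a w hw0 hw1 hwa k hk
  refine ⟨x, hxS, ?_⟩
  have h1 : ‖a - (k : ℝ)⁻¹ • ∑ i, x i‖ = Real.sqrt (‖a - (k : ℝ)⁻¹ • ∑ i, x i‖ ^ 2) :=
    (Real.sqrt_sq (norm_nonneg _)).symm
  rw [h1]
  calc Real.sqrt (‖a - (k : ℝ)⁻¹ • ∑ i, x i‖ ^ 2)
      ≤ Real.sqrt ((Metric.diam (S : Set X)) ^ 2 / k) := Real.sqrt_le_sqrt hx
    _ = Metric.diam (S : Set X) / Real.sqrt k := by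
        rw [Real.sqrt_div (sq_nonneg _), Real.sqrt_sq Metric.diam_nonneg]
end

section
/- Let X be a real inner product space and S a finite set of n ≥ 2 points in X. Then there is a partition of S into two sets S₁, S₂ with |S₁| = ⌊n/2⌋ and |S₂| = ⌈n/2⌉ such that ‖c(S₁) − c(S₂)‖ ≤ 2^{1/2} · ⌈n/2⌉^{−1/2} · diam S, where c(T) = (1/|T|) ∑_{t∈T} t is the centroid of T. -/
/-!
Average `‖c(S \ T) - c(T)‖²` over all `m`-subsets `T` of `S`, where `n = #S`, `m = ⌈n/2⌉`,
`k = n - m`. With `y x = x - c(S)` we have `c(S \ T) - c(T) = -(1/k + 1/m) • ∑_{x ∈ T} y x`, and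
since `∑_S y = 0`, `‖∑_T y‖² = -∑_{i ∈ T, j ∉ T} ⟪y i, y j⟫`. Every pair `i ≠ j` is separated
(`i ∈ T`, `j ∉ T`) by exactly `C(n-2, m-1)` subsets and nothing separates `i` from itself, so
`∑_T ‖∑_T y‖² = C(n-2, m-1) ∑ ‖y‖²`. By Lagrange's identity `2n ∑ ‖y‖² = ∑_{x,z} ‖x - z‖²`, which is
at most `n(n-1) diam² S`. Altogether the average of `‖c(S \ T) - c(T)‖²` is at most
`n/(2km) · diam² S ≤ 2/m · diam² S`, and some `T` is no worse than the average.
-/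

theorem Nat.mul_sub_mul_choose {n m : ℕ} (hm : 1 ≤ m) :
    m * (n - m) * n.choose m = n * (n - 1) * (n - 2).choose (m - 1) := by
  obtain ⟨m, rfl⟩ := Nat.exists_eq_add_of_le' hm
  match n with
  | 0 => simp
  | 1 => simp
  | n + 2 =>
    rw [show n + 2 - (m + 1) = n + 1 - m by omega]
    calc (m + 1) * (n + 1 - m) * (n + 2).choose (m + 1)
        = (n + 2) * (n + 1).choose m * (n + 1 - m) := by rw [Nat.add_one_mul_choose_eq]; ring
      _ = (n + 2) * (n + 1) * n.choose m := by rw [mul_assoc, ← Nat.choose_mul_succ_eq]; ring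

theorem sum_sum_dist_sq_le_diam_sq {α : Type*} [PseudoMetricSpace α] (S : Finset α) :
    ∑ x ∈ S, ∑ y ∈ S, dist x y ^ 2
      ≤ S.card * (S.card - 1 : ℝ) * Metric.diam (S : Set α) ^ 2 := by
  classical
  have hrow : ∀ x ∈ S, ∑ y ∈ S, dist x y ^ 2 ≤ (S.card - 1 : ℝ) * Metric.diam (S : Set α) ^ 2 := by
    intro x hx
    rw [← Finset.add_sum_erase _ _ hx, dist_self, sq, zero_mul, zero_add]
    calc ∑ y ∈ S.erase x, dist x y ^ 2 ≤ ∑ y ∈ S.erase x, Metric.diam (S : Set α) ^ 2 :=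
          Finset.sum_le_sum fun y hy => pow_le_pow_left₀ dist_nonneg
            (Metric.dist_le_diam_of_mem S.finite_toSet.isBounded hx (Finset.mem_of_mem_erase hy)) 2
      _ = _ := by
          rw [Finset.sum_const, Finset.card_erase_of_mem hx, nsmul_eq_mul,
            Nat.cast_pred (Finset.card_pos.2 ⟨x, hx⟩)]
  calc ∑ x ∈ S, ∑ y ∈ S, dist x y ^ 2 ≤ ∑ x ∈ S, (S.card - 1 : ℝ) * Metric.diam (S : Set α) ^ 2 :=
        Finset.sum_le_sum hrow
    _ = _ := by rw [Finset.sum_const, nsmul_eq_mul, mul_assoc]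

section PowersetCard

variable {ι : Type*} [DecidableEq ι]

theorem card_filter_mem_notMem_powersetCard {S : Finset ι} {i j : ι} (hi : i ∈ S) (hj : j ∈ S)
    (hij : i ≠ j) {m : ℕ} (hm : 1 ≤ m) :
    ((S.powersetCard m).filter (fun T => i ∈ T ∧ j ∉ T)).card = (S.card - 2).choose (m - 1) := by
  have : (S.powersetCard m).filter (fun T => i ∈ T ∧ j ∉ T)
      = ((S.erase j).powersetCard m).filter ({i} ⊆ ·) := by
    ext T
    simp only [Finset.mem_filter, Finset.mem_powersetCard, Finset.singleton_subset_iff,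
      Finset.subset_erase]
    tauto
  rw [this, Finset.card_filter_powersetCard_subset _ _ _ (by simpa using ⟨hij, hi⟩) (by simpa),
    Finset.card_erase_of_mem hj, Finset.card_singleton, Nat.sub_sub]

theorem sum_sum_sdiff_eq_sum_sum_card_smul {M : Type*} [AddCommMonoid M] {S : Finset ι}
    {𝒯 : Finset (Finset ι)} (h𝒯 : ∀ T ∈ 𝒯, T ⊆ S) (g : ι → ι → M) :
    ∑ T ∈ 𝒯, ∑ i ∈ T, ∑ j ∈ S \ T, g i j
      = ∑ i ∈ S, ∑ j ∈ S, (𝒯.filter (fun T => i ∈ T ∧ j ∉ T)).card • g i j := by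
  have hT : ∀ T ∈ 𝒯, ∑ i ∈ T, ∑ j ∈ S \ T, g i j
      = ∑ i ∈ S, ∑ j ∈ S, if i ∈ T ∧ j ∉ T then g i j else 0 := by
    intro T hT
    rw [← Finset.inter_eq_right.2 (h𝒯 T hT), ← Finset.filter_mem_eq_inter,
      ← Finset.filter_notMem_eq_sdiff]
    simp [Finset.sum_filter, ite_and, Finset.sum_ite_irrel]
  simp_rw [← Finset.sum_const, Finset.sum_filter]
  rw [Finset.sum_congr rfl hT, Finset.sum_comm]
  exact Finset.sum_congr rfl fun i _ => Finset.sum_comm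

end PowersetCard

section InnerProductSpace

variable {ι E : Type*} [NormedAddCommGroup E] [InnerProductSpace ℝ E]

theorem sum_sum_norm_sub_sq (S : Finset ι) (y : ι → E) :
    ∑ i ∈ S, ∑ j ∈ S, ‖y i - y j‖ ^ 2
      = 2 * S.card * ∑ i ∈ S, ‖y i‖ ^ 2 - 2 * ‖∑ i ∈ S, y i‖ ^ 2 := by
  simp_rw [norm_sub_sq_real, Finset.sum_add_distrib, Finset.sum_sub_distrib, Finset.sum_const,
    ← Finset.mul_sum, ← inner_sum, ← sum_inner, real_inner_self_eq_norm_sq, nsmul_eq_mul,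
    ← Finset.mul_sum]
  ring

variable [DecidableEq ι]

theorem norm_sum_sq_eq_neg_sum_sum_sdiff_inner {S T : Finset ι} (hTS : T ⊆ S) {y : ι → E}
    (hy : ∑ i ∈ S, y i = 0) :
    ‖∑ i ∈ T, y i‖ ^ 2 = -∑ i ∈ T, ∑ j ∈ S \ T, inner ℝ (y i) (y j) := by
  have hcompl : ∑ j ∈ S \ T, y j = -∑ i ∈ T, y i := by
    rw [Finset.sum_sdiff_eq_sub hTS, hy, zero_sub]
  calc ‖∑ i ∈ T, y i‖ ^ 2 = -inner ℝ (∑ i ∈ T, y i) (∑ j ∈ S \ T, y j) := by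
        rw [hcompl, inner_neg_right, neg_neg, real_inner_self_eq_norm_sq]
    _ = _ := by rw [sum_inner]; simp only [inner_sum]

theorem sum_powersetCard_norm_sum_sq {S : Finset ι} {y : ι → E} (hy : ∑ i ∈ S, y i = 0) {m : ℕ}
    (hm : 1 ≤ m) :
    ∑ T ∈ S.powersetCard m, ‖∑ i ∈ T, y i‖ ^ 2
      = (S.card - 2).choose (m - 1) * ∑ i ∈ S, ‖y i‖ ^ 2 := by
  set C : ℕ := (S.card - 2).choose (m - 1)
  have hcount : ∀ i ∈ S, ∀ j ∈ S,
      ((S.powersetCard m).filter (fun T => i ∈ T ∧ j ∉ T)).card = if i = j then 0 else C := by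
    intro i hi j hj
    split_ifs with hij
    · simp [hij]
    · exact card_filter_mem_notMem_powersetCard hi hj hij hm
  have hdiag : ∑ i ∈ S, ∑ j ∈ S, inner ℝ (y i) (y j) = (0 : ℝ) := by
    simp_rw [← inner_sum, ← sum_inner, hy, inner_zero_left]
  calc ∑ T ∈ S.powersetCard m, ‖∑ i ∈ T, y i‖ ^ 2
      = -∑ T ∈ S.powersetCard m, ∑ i ∈ T, ∑ j ∈ S \ T, inner ℝ (y i) (y j) := by
        rw [← Finset.sum_neg_distrib]
        exact Finset.sum_congr rfl fun T hT =>
          norm_sum_sq_eq_neg_sum_sum_sdiff_inner (Finset.mem_powersetCard.1 hT).1 hy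
    _ = -∑ i ∈ S, ∑ j ∈ S, (if i = j then 0 else C) • inner ℝ (y i) (y j) := by
        rw [sum_sum_sdiff_eq_sum_sum_card_smul fun T hT => (Finset.mem_powersetCard.1 hT).1]
        exact congrArg _ <| Finset.sum_congr rfl fun i hi =>
          Finset.sum_congr rfl fun j hj => by rw [hcount i hi j hj]
    _ = -∑ i ∈ S, (C • ∑ j ∈ S, inner ℝ (y i) (y j) - C • inner ℝ (y i) (y i)) := by
        refine congrArg _ <| Finset.sum_congr rfl fun i hi => ?_
        rw [← Finset.add_sum_erase _ _ hi, ← Finset.add_sum_erase S _ hi, if_pos rfl, zero_smul,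
          zero_add, smul_add, add_sub_cancel_left, Finset.smul_sum]
        exact Finset.sum_congr rfl fun j hj => by rw [if_neg (Finset.ne_of_mem_erase hj).symm]
    _ = C * ∑ i ∈ S, ‖y i‖ ^ 2 := by
        rw [Finset.sum_sub_distrib, ← Finset.smul_sum, ← Finset.smul_sum, hdiag]
        simp only [real_inner_self_eq_norm_sq, nsmul_eq_mul]
        ring

end InnerProductSpace

section Centroid

variable {E : Type*} [NormedAddCommGroup E] [InnerProductSpace ℝ E]

noncomputable def centroid (T : Finset E) : E := (T.card : ℝ)⁻¹ • ∑ x ∈ T, x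

theorem sum_sub_centroid (S : Finset E) : ∑ x ∈ S, (x - centroid S) = 0 := by
  rcases S.eq_empty_or_nonempty with rfl | hS
  · simp
  rw [Finset.sum_sub_distrib, Finset.sum_const, centroid, ← Nat.cast_smul_eq_nsmul ℝ, smul_smul,
    mul_inv_cancel₀ (by simpa using hS.ne_empty), one_smul, sub_self]

theorem sum_sum_norm_sub_sq_eq_mul_sum_norm_sub_centroid_sq (S : Finset E) :
    ∑ x ∈ S, ∑ y ∈ S, ‖x - y‖ ^ 2 = 2 * S.card * ∑ x ∈ S, ‖x - centroid S‖ ^ 2 := by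
  have := sum_sum_norm_sub_sq S (fun x => x - centroid S)
  simp_rw [sub_sub_sub_cancel_right, sum_sub_centroid, norm_zero] at this
  simpa using this

variable [DecidableEq E]

theorem centroid_sdiff_sub_centroid {S T : Finset E} (hTS : T ⊆ S) (hT : T.Nonempty)
    (hST : (S \ T).Nonempty) :
    centroid (S \ T) - centroid T
      = -(((S \ T).card : ℝ)⁻¹ + (T.card : ℝ)⁻¹) • ∑ x ∈ T, (x - centroid S) := by
  have hk : ((S \ T).card : ℝ) ≠ 0 := by simpa using hST.ne_empty
  have hm : (T.card : ℝ) ≠ 0 := by simpa using hT.ne_empty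
  have hn : (S.card : ℝ) = (S \ T).card + T.card := by
    rw [Finset.card_sdiff_of_subset hTS, Nat.cast_sub (Finset.card_le_card hTS), sub_add_cancel]
  have hsum : ∑ x ∈ S, x = (S.card : ℝ) • centroid S := by
    rw [centroid, smul_smul, mul_inv_cancel₀ (hn ▸ by positivity), one_smul]
  have hsdiff : ∑ x ∈ S \ T, x = (S.card : ℝ) • centroid S - ∑ x ∈ T, x := by
    rw [Finset.sum_sdiff_eq_sub hTS, hsum]
  have hcentered : ∑ x ∈ T, (x - centroid S) = ∑ x ∈ T, x - (T.card : ℝ) • centroid S := by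
    rw [Finset.sum_sub_distrib, Finset.sum_const, Nat.cast_smul_eq_nsmul]
  rw [hcentered, centroid, centroid, hsdiff, hn]
  match_scalars <;> field_simp <;> ring

theorem mul_sum_powersetCard_norm_centroid_sub_sq (S : Finset E) {m : ℕ} (hm : 1 ≤ m)
    (hmS : m < S.card) :
    2 * m * (S.card - m : ℝ) * (S.card - 1 : ℝ) *
        ∑ T ∈ S.powersetCard m, ‖centroid (S \ T) - centroid T‖ ^ 2
      = S.card.choose m * ∑ x ∈ S, ∑ y ∈ S, ‖x - y‖ ^ 2 := by
  have hdiff : ∀ T ∈ S.powersetCard m, ‖centroid (S \ T) - centroid T‖ ^ 2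
      = ((S.card - m : ℝ)⁻¹ + (m : ℝ)⁻¹) ^ 2 * ‖∑ x ∈ T, (x - centroid S)‖ ^ 2 := by
    intro T hT
    obtain ⟨hTS, hTm⟩ := Finset.mem_powersetCard.1 hT
    have hT : T.Nonempty := Finset.card_pos.1 (by omega)
    have hST : (S \ T).Nonempty :=
      Finset.card_pos.1 (by rw [Finset.card_sdiff_of_subset hTS]; omega)
    rw [centroid_sdiff_sub_centroid hTS hT hST, norm_smul, mul_pow, Real.norm_eq_abs, sq_abs,
      neg_sq, Finset.card_sdiff_of_subset hTS, hTm, Nat.cast_sub hmS.le]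
  have hbinom : (m : ℝ) * (S.card - m) * S.card.choose m
      = S.card * (S.card - 1) * (S.card - 2).choose (m - 1) := by
    have := congrArg (Nat.cast : ℕ → ℝ) (Nat.mul_sub_mul_choose (n := S.card) hm)
    push_cast [Nat.cast_sub hmS.le, Nat.cast_sub (hm.trans_lt hmS).le] at this
    exact this
  have hm0 : (m : ℝ) ≠ 0 := by positivity
  have hk0 : (S.card - m : ℝ) ≠ 0 := sub_ne_zero.2 (by exact_mod_cast hmS.ne')
  rw [Finset.sum_congr rfl hdiff, ← Finset.mul_sum,
    sum_powersetCard_norm_sum_sq (sum_sub_centroid S) hm,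
    sum_sum_norm_sub_sq_eq_mul_sum_norm_sub_centroid_sq]
  field_simp
  linear_combination (-(S.card : ℝ) * ∑ x ∈ S, ‖x - centroid S‖ ^ 2) * hbinom

theorem exists_mem_powersetCard_mul_norm_centroid_sub_sq_le (S : Finset E) {m : ℕ} (hm : 1 ≤ m)
    (hmS : m < S.card) :
    ∃ T ∈ S.powersetCard m, 2 * m * (S.card - m : ℝ) * ‖centroid (S \ T) - centroid T‖ ^ 2
      ≤ S.card * Metric.diam (S : Set E) ^ 2 := by
  have hn1 : (0 : ℝ) < S.card - 1 := sub_pos.2 (by exact_mod_cast hm.trans_lt hmS)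
  have hpairs : ∑ x ∈ S, ∑ y ∈ S, ‖x - y‖ ^ 2
      ≤ S.card * (S.card - 1 : ℝ) * Metric.diam (S : Set E) ^ 2 := by
    simpa only [dist_eq_norm] using sum_sum_dist_sq_le_diam_sq S
  have hsum : (S.card - 1 : ℝ) *
        ∑ T ∈ S.powersetCard m, 2 * m * (S.card - m : ℝ) * ‖centroid (S \ T) - centroid T‖ ^ 2
      ≤ (S.card - 1 : ℝ) * ∑ T ∈ S.powersetCard m, (S.card * Metric.diam (S : Set E) ^ 2) := by
    calc _ = S.card.choose m * ∑ x ∈ S, ∑ y ∈ S, ‖x - y‖ ^ 2 := by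
          rw [← Finset.mul_sum, ← mul_sum_powersetCard_norm_centroid_sub_sq S hm hmS]; ring
      _ ≤ S.card.choose m * (S.card * (S.card - 1 : ℝ) * Metric.diam (S : Set E) ^ 2) := by
          gcongr
      _ = _ := by rw [Finset.sum_const, Finset.card_powersetCard, nsmul_eq_mul]; ring
  exact Finset.exists_le_of_sum_le (Finset.powersetCard_nonempty.2 hmS.le)
    (le_of_mul_le_mul_left hsum hn1)

end Centroid

/-- Maurey lemma for centroids in a real inner product space: a finite set `S` of
`n ≥ 2` points can be partitioned into halves `S₁, S₂` of sizes `⌊n/2⌋, ⌈n/2⌉`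
with `‖c(S₁) − c(S₂)‖ ≤ √2 · ⌈n/2⌉^{−1/2} · diam S`. -/
theorem maurey_centroid_hilbert {X : Type*} [DecidableEq X] [NormedAddCommGroup X] [InnerProductSpace ℝ X]
    (S : Finset X) (hS : 2 ≤ S.card) :
    ∃ S₁ S₂ : Finset X, Disjoint S₁ S₂ ∧ S₁ ∪ S₂ = S ∧
      S₁.card = S.card / 2 ∧ S₂.card = (S.card + 1) / 2 ∧
      ‖(S₁.card : ℝ)⁻¹ • ∑ x ∈ S₁, x - (S₂.card : ℝ)⁻¹ • ∑ x ∈ S₂, x‖ ≤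
        Real.sqrt 2 / Real.sqrt (((S.card + 1) / 2 : ℕ) : ℝ) * Metric.diam (S : Set X) := by
  set m := (S.card + 1) / 2
  obtain ⟨T, hT, hle⟩ :=
    exists_mem_powersetCard_mul_norm_centroid_sub_sq_le S (m := m) (by omega) (by omega)
  obtain ⟨hTS, hTm⟩ := Finset.mem_powersetCard.1 hT
  have hk : (S \ T).card = S.card / 2 := by rw [Finset.card_sdiff_of_subset hTS, hTm]; omega
  refine ⟨S \ T, T, Finset.sdiff_disjoint, Finset.sdiff_union_of_subset hTS, hk, hTm, ?_⟩
  change ‖centroid (S \ T) - centroid T‖ ≤ _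
  have hm : (0 : ℝ) < m := Nat.cast_pos.2 (by omega)
  have hquarter : (S.card : ℝ) ≤ 4 * (S.card - m) := by
    rw [← Nat.cast_sub (by omega)]; exact_mod_cast (by omega : S.card ≤ 4 * (S.card - m))
  have hsq : ‖centroid (S \ T) - centroid T‖ ^ 2 ≤ 2 / m * Metric.diam (S : Set X) ^ 2 := by
    rw [div_mul_eq_mul_div, le_div_iff₀ hm]
    nlinarith [sq_nonneg (Metric.diam (S : Set X))]
  calc ‖centroid (S \ T) - centroid T‖ ≤ Real.sqrt (2 / m * Metric.diam (S : Set X) ^ 2) :=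
        Real.le_sqrt_of_sq_le hsq
    _ = _ := by rw [Real.sqrt_mul (by positivity), Real.sqrt_sq Metric.diam_nonneg,
        Real.sqrt_div zero_le_two]
end

section
/- For all integers n ≥ 1, r ≥ 1, k ≥ 1, and s with 0 ≤ s ≤ r − 1 and n = k·r + s: C(k + r − 1, r) ≥ r^{−r} · C(n, r), i.e., r^r · C(k + r − 1, r) ≥ C(n, r), where C denotes the binomial coefficient. -/
lemma selection_counting_aux (r k : ℕ) (hr : 1 ≤ r) (hk : 1 ≤ k) (n : ℕ)
    (hn : n ≤ k * r + r - 1) :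
    ∀ m, m ≤ r → Nat.descFactorial n m ≤ r ^ m * Nat.descFactorial (k + r - 1) m := by
  intro m
  induction m with
  | zero => simp
  | succ m ih =>
    intro hm
    have hm' : m ≤ r := Nat.le_of_succ_le hm
    have ih' := ih hm'
    rw [Nat.descFactorial_succ, Nat.descFactorial_succ]
    have h1 : n - m ≤ k * r + (r - 1 - m) := by omega
    have h2 : k * r + (r - 1 - m) ≤ r * (k + r - 1 - m) := by
      have heq : r * (k + r - 1 - m) = r * k + r * (r - 1 - m) := by
        rw [← Nat.mul_add]; congr 1; omega
      rw [heq, Nat.mul_comm r k]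
      exact Nat.add_le_add_left (Nat.le_mul_of_pos_left _ hr) _
    have h3 : n - m ≤ r * (k + r - 1 - m) := le_trans h1 h2
    calc (n - m) * Nat.descFactorial n m
        ≤ (r * (k + r - 1 - m)) * (r ^ m * Nat.descFactorial (k + r - 1) m) :=
          Nat.mul_le_mul h3 ih'
      _ = r ^ (m + 1) * ((k + r - 1 - m) * Nat.descFactorial (k + r - 1) m) := by ring

/-- Counting inequality from the selection lemma: if `n = k·r + s` with
`1 ≤ r`, `1 ≤ k`, `0 ≤ s ≤ r − 1`, then `r^r · C(k+r−1, r) ≥ C(n, r)`. -/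
theorem selection_counting (n r k s : ℕ) (hr : 1 ≤ r) (hk : 1 ≤ k)
    (hs : s ≤ r - 1) (hn : n = k * r + s) :
    Nat.choose n r ≤ r ^ r * Nat.choose (k + r - 1) r := by
  have key := selection_counting_aux r k hr hk n (by omega) r le_rfl
  rw [Nat.descFactorial_eq_factorial_mul_choose, Nat.descFactorial_eq_factorial_mul_choose] at key
  have hfac : 0 < Nat.factorial r := Nat.factorial_pos r
  have : Nat.factorial r * Nat.choose n r ≤ Nat.factorial r * (r ^ r * Nat.choose (k + r - 1) r) := by
    calc Nat.factorial r * Nat.choose n r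
        ≤ r ^ r * (Nat.factorial r * Nat.choose (k + r - 1) r) := key
      _ = Nat.factorial r * (r ^ r * Nat.choose (k + r - 1) r) := by ring
  exact Nat.le_of_mul_le_mul_left this hfac
end

section
/- Let X be a real inner product space, P₁,…,P_r finite point sets in X with D = maxᵢ diam Pᵢ, η > 0, and a ∈ X such that B(a, η) ∩ conv Pᵢ ≠ ∅ for every i ∈ [r]. Then for every positive integer k there exist sequences {x^i_j}_{j=1}^k ⊆ Pᵢ (repetitions allowed) such that, setting a^i_k = (1/k)∑_{j=1}^k x^i_j, one has ‖a − (1/r)∑_{i=1}^r a^i_k‖ ≤ k^{−1/2} r^{−1/2} D + η. -/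
/-!
Each colour contributes its points one at a time. If `y` lies in the convex hull of `P` and
`E` is the current error vector, some `x ∈ P` satisfies `⟪E, x - y⟫ ≤ 0`, because a linear
functional attains its minimum over a convex hull at a point of the set. Adding `x - y` to
`E` then increases `‖E‖²` by at most `‖x - y‖² ≤ (diam P)²`, so after choosing `k` points of
each of the `r` colours the total error satisfies `‖∑ (x i j - y i)‖² ≤ r k D²`. Dividing by
`r k` and comparing each `y i` with `a` gives the bound.
-/

open Finset
open scoped InnerProductSpace

section NormedSpace

variable {X : Type*} [SeminormedAddCommGroup X] [NormedSpace ℝ X]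

theorem norm_sub_le_diam_of_mem_convexHull {s : Set X} (hs : Bornology.IsBounded s) {x y : X}
    (hx : x ∈ s) (hy : y ∈ convexHull ℝ s) : ‖x - y‖ ≤ Metric.diam s := by
  rw [← dist_eq_norm, ← convexHull_diam]
  exact Metric.dist_le_diam_of_mem (isBounded_convexHull.mpr hs) (subset_convexHull ℝ s hx) hy

theorem sub_centroid_eq {r k : ℕ} (hr : r ≠ 0) (hk : k ≠ 0) (a : X) (x : Fin r → Fin k → X)
    (y : Fin r → X) :
    a - (r : ℝ)⁻¹ • ∑ i, (k : ℝ)⁻¹ • ∑ j, x i j =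
      (r : ℝ)⁻¹ • ∑ i, (a - y i) - ((r : ℝ) * k)⁻¹ • ∑ i, ∑ j, (x i j - y i) := by
  simp only [sum_sub_distrib, sum_const, card_univ, Fintype.card_fin, ← smul_sum,
    ← Nat.cast_smul_eq_nsmul ℝ, smul_sub, smul_smul]
  match_scalars <;> field_simp
  ring

theorem norm_sub_centroid_le {r k : ℕ} (hr : 0 < r) (hk : 0 < k) {a : X}
    {x : Fin r → Fin k → X} {y : Fin r → X} {D η : ℝ} (hay : ∀ i, ‖a - y i‖ ≤ η)
    (hxy : ‖∑ i, ∑ j, (x i j - y i)‖ ≤ √(r * k) * D) :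
    ‖a - (r : ℝ)⁻¹ • ∑ i, (k : ℝ)⁻¹ • ∑ j, x i j‖ ≤ D / (√k * √r) + η := by
  have hr₀ : (0 : ℝ) < r := Nat.cast_pos.mpr hr
  have hk₀ : (0 : ℝ) < k := Nat.cast_pos.mpr hk
  have hmean : ‖(r : ℝ)⁻¹ • ∑ i, (a - y i)‖ ≤ η := by
    rw [norm_smul, norm_inv, Real.norm_natCast, inv_mul_le_iff₀ hr₀]
    simpa using norm_sum_le_of_le univ fun i _ => hay i
  have hdev : ‖((r : ℝ) * k)⁻¹ • ∑ i, ∑ j, (x i j - y i)‖ ≤ D / (√k * √r) := by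
    rw [norm_smul, norm_inv, Real.norm_of_nonneg (by positivity)]
    calc ((r : ℝ) * k)⁻¹ * ‖_‖ ≤ ((r : ℝ) * k)⁻¹ * (√(r * k) * D) := by gcongr
      _ = D / (√k * √r) := by
        rw [Real.sqrt_mul hr₀.le]
        field_simp
        rw [Real.sq_sqrt hr₀.le, Real.sq_sqrt hk₀.le]
  rw [sub_centroid_eq hr.ne' hk.ne' a x y, add_comm]
  exact (norm_sub_le _ _).trans (add_le_add hmean hdev)

end NormedSpace

section InnerProductSpace

variable {X : Type*} [NormedAddCommGroup X] [InnerProductSpace ℝ X]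

theorem exists_mem_inner_le_of_mem_convexHull {s : Set X} {y : X}
    (hy : y ∈ convexHull ℝ s) (E : X) : ∃ x ∈ s, ⟪E, x⟫_ℝ ≤ ⟪E, y⟫_ℝ :=
  ((innerₛₗ ℝ E).concaveOn convex_univ).exists_le_of_mem_convexHull (Set.subset_univ s) hy

theorem exists_mem_norm_add_sub_sq_le {s : Set X} {y : X} (hy : y ∈ convexHull ℝ s) {D : ℝ}
    (hD : ∀ x ∈ s, ‖x - y‖ ≤ D) (E : X) :
    ∃ x ∈ s, ‖E + (x - y)‖ ^ 2 ≤ ‖E‖ ^ 2 + D ^ 2 := by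
  obtain ⟨x, hxs, hx⟩ := exists_mem_inner_le_of_mem_convexHull hy E
  refine ⟨x, hxs, ?_⟩
  have hinner : ⟪E, x - y⟫_ℝ ≤ 0 := by rw [inner_sub_right]; linarith
  have hsq : ‖x - y‖ ^ 2 ≤ D ^ 2 := pow_le_pow_left₀ (norm_nonneg _) (hD x hxs) 2
  rw [norm_add_sq_real]
  linarith

theorem exists_norm_sum_sub_sq_le {ι : Type*} [DecidableEq ι] {s : ι → Set X} {y : ι → X}
    (hy : ∀ i, y i ∈ convexHull ℝ (s i)) {D : ℝ} (hD : ∀ i, ∀ x ∈ s i, ‖x - y i‖ ≤ D)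
    (t : Finset ι) :
    ∃ z : ι → X, (∀ i ∈ t, z i ∈ s i) ∧ ‖∑ i ∈ t, (z i - y i)‖ ^ 2 ≤ #t * D ^ 2 := by
  induction t using Finset.induction_on with
  | empty => exact ⟨y, by simp, by simp⟩
  | @insert i t hit ih =>
    obtain ⟨z, hzs, hz⟩ := ih
    obtain ⟨x, hxs, hx⟩ := exists_mem_norm_add_sub_sq_le (hy i) (hD i) (∑ j ∈ t, (z j - y j))
    refine ⟨Function.update z i x, ?_, ?_⟩
    · intro j hj
      rcases eq_or_ne j i with rfl | hji
      · simpa using hxs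
      · simpa [hji] using hzs j ((mem_insert.mp hj).resolve_left hji)
    · have hsum : ∑ j ∈ t, (Function.update z i x j - y j) = ∑ j ∈ t, (z j - y j) :=
        sum_congr rfl fun j hj => by rw [Function.update_of_ne (ne_of_mem_of_not_mem hj hit)]
      rw [sum_insert hit, hsum, Function.update_self, add_comm, card_insert_of_notMem hit]
      push_cast
      linarith

theorem exists_norm_sum_sub_le_sqrt_card_mul {ι : Type*} [Fintype ι] {s : ι → Set X}
    {y : ι → X} (hy : ∀ i, y i ∈ convexHull ℝ (s i)) {D : ℝ} (hD₀ : 0 ≤ D)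
    (hD : ∀ i, ∀ x ∈ s i, ‖x - y i‖ ≤ D) :
    ∃ z : ι → X, (∀ i, z i ∈ s i) ∧ ‖∑ i, (z i - y i)‖ ≤ √(Fintype.card ι) * D := by
  classical
  obtain ⟨z, hzs, hz⟩ := exists_norm_sum_sub_sq_le hy hD univ
  refine ⟨z, fun i => hzs i (mem_univ i), ?_⟩
  rw [← Real.sqrt_sq hD₀, ← Real.sqrt_mul (Nat.cast_nonneg _)]
  exact Real.le_sqrt_of_sq_le hz

end InnerProductSpace

theorem colorful_maurey_general {X : Type*} [NormedAddCommGroup X] [InnerProductSpace ℝ X]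
    (r : ℕ) (hr : 0 < r) (P : Fin r → Finset X) (D : ℝ)
    (hD : ∀ i, Metric.diam (P i : Set X) ≤ D) (η : ℝ) (a : X)
    (ha : ∀ i, ∃ y ∈ convexHull ℝ (P i : Set X), ‖a - y‖ ≤ η)
    (k : ℕ) (hk : 0 < k) :
    ∃ x : Fin r → Fin k → X, (∀ i j, x i j ∈ P i) ∧
      ‖a - (r : ℝ)⁻¹ • ∑ i, (k : ℝ)⁻¹ • ∑ j, x i j‖ ≤
        D / (Real.sqrt k * Real.sqrt r) + η := by
  choose y hy hay using ha
  have hPD : ∀ i, ∀ x ∈ (P i : Set X), ‖x - y i‖ ≤ D := fun i x hx =>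
    (norm_sub_le_diam_of_mem_convexHull (P i).finite_toSet.isBounded hx (hy i)).trans (hD i)
  obtain ⟨x, hxP, hx⟩ := exists_norm_sum_sub_le_sqrt_card_mul
    (s := fun p : Fin r × Fin k => (P p.1 : Set X)) (fun p => hy p.1)
    (Metric.diam_nonneg.trans (hD ⟨0, hr⟩)) (fun p => hPD p.1)
  refine ⟨fun i j => x (i, j), fun i j => hxP (i, j), norm_sub_centroid_le hr hk hay ?_⟩
  simpa [Fintype.sum_prod_type] using hx

/-- Colorful Maurey lemma in a real inner product space: if the closed ball
`B(a, η)` meets `conv Pᵢ` for each of the finite sets `P₁,…,P_r` of diameter at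
most `D`, then for every `k ≥ 1` one can pick `k` points from each `Pᵢ`
(repetitions allowed) so that the centroid of the `r` empirical averages is
within `k^{−1/2} r^{−1/2} D + η` of `a`. -/
theorem colorful_maurey {X : Type*} [NormedAddCommGroup X] [InnerProductSpace ℝ X]
    (r : ℕ) (hr : 0 < r) (P : Fin r → Finset X) (D : ℝ)
    (hD : ∀ i, Metric.diam (P i : Set X) ≤ D) (η : ℝ) (hη : 0 < η) (a : X)
    (ha : ∀ i, ∃ y ∈ convexHull ℝ (P i : Set X), ‖a - y‖ ≤ η)
    (k : ℕ) (hk : 0 < k) :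
    ∃ x : Fin r → Fin k → X, (∀ i j, x i j ∈ P i) ∧
      ‖a - (r : ℝ)⁻¹ • ∑ i, (k : ℝ)⁻¹ • ∑ j, x i j‖ ≤
        D / (Real.sqrt k * Real.sqrt r) + η :=
  colorful_maurey_general r hr P D hD η a ha k hk
end

section
/- Let X be a real inner product space, P a finite set of n points in X with D = diam P, r ∈ [n], and ε > 0. Then there is a finite set F ⊆ X with |F| ≤ r^r ε^{−r} such that for every Y ⊆ P with |Y| ≥ ε n, the set F + B(0, C r^{−1/2} D) intersects conv Y, where C = 2√2/(1 − 1/√2). -/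
open Finset

section Aux

lemma sum_piFinset_succ {α β : Type*} [DecidableEq α] [AddCommMonoid β] (Y : Finset α) (r : ℕ)
    (f : (Fin (r + 1) → α) → β) :
    ∑ T ∈ Fintype.piFinset (fun _ : Fin (r + 1) => Y), f T
      = ∑ y ∈ Y, ∑ T ∈ Fintype.piFinset (fun _ : Fin r => Y), f (Fin.cons y T) := by
  rw [← Finset.sum_product']
  refine Finset.sum_nbij' (fun T => (T 0, Fin.tail T)) (fun p => Fin.cons p.1 p.2) ?_ ?_ ?_ ?_ ?_
  · intro T hT
    rw [Fintype.mem_piFinset] at hT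
    exact Finset.mem_product.mpr ⟨hT 0, Fintype.mem_piFinset.mpr fun i => hT i.succ⟩
  · intro p hp
    rw [Finset.mem_product] at hp
    rw [Fintype.mem_piFinset]
    intro i
    refine Fin.cases ?_ ?_ i
    · exact hp.1
    · exact fun j => Fintype.mem_piFinset.mp hp.2 j
  · intro T _
    exact Fin.cons_self_tail T
  · intro p _
    simp [Fin.tail_cons]
  · intro T _
    rw [Fin.cons_self_tail T]

variable {X : Type*} [NormedAddCommGroup X] [InnerProductSpace ℝ X] [DecidableEq X]

lemma sum_norm_sq_piFinset (Y : Finset X) (v : X → X) (hv : ∑ y ∈ Y, v y = 0) (r : ℕ) :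
    ∑ T ∈ Fintype.piFinset (fun _ : Fin r => Y), ‖∑ i, v (T i)‖ ^ 2
      = r * (Y.card : ℝ) ^ (r - 1) * ∑ y ∈ Y, ‖v y‖ ^ 2 := by
  induction r with
  | zero => simp
  | succ r ih =>
    rw [sum_piFinset_succ]
    have hsplit : ∀ y ∈ Y, ∑ T ∈ Fintype.piFinset (fun _ : Fin r => Y),
        ‖∑ i, v ((Fin.cons y T : Fin (r+1) → X) i)‖ ^ 2
        = ∑ T ∈ Fintype.piFinset (fun _ : Fin r => Y),
          (‖v y‖ ^ 2 + 2 * (inner ℝ (v y) (∑ i, v (T i)) : ℝ) + ‖∑ i, v (T i)‖ ^ 2) := by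
      intro y _
      refine Finset.sum_congr rfl fun T _ => ?_
      have h1 : (fun i => v ((Fin.cons y T : Fin (r+1) → X) i)) = Fin.cons (v y) (fun i => v (T i)) := by
        funext i
        refine Fin.cases rfl (fun j => ?_) i
        simp [Fin.cons_succ]
      rw [show (∑ i, v ((Fin.cons y T : Fin (r+1) → X) i)) = v y + ∑ i, v (T i) by
        rw [show (∑ i, v ((Fin.cons y T : Fin (r+1) → X) i)) = ∑ i, Fin.cons (v y) (fun i => v (T i)) i by
          rw [h1]]
        exact Fin.sum_cons _ _]
      exact norm_add_sq_real _ _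
    rw [Finset.sum_congr rfl hsplit]
    have hcard : (Fintype.piFinset (fun _ : Fin r => Y)).card = Y.card ^ r := by
      simp [Fintype.card_piFinset]
    simp only [Finset.sum_add_distrib]
    have t1 : ∑ y ∈ Y, ∑ _T ∈ Fintype.piFinset (fun _ : Fin r => Y), ‖v y‖ ^ 2
        = (Y.card : ℝ) ^ r * ∑ y ∈ Y, ‖v y‖ ^ 2 := by
      simp only [Finset.sum_const, hcard, nsmul_eq_mul, Nat.cast_pow, ← Finset.mul_sum]
    have t2 : ∑ y ∈ Y, ∑ T ∈ Fintype.piFinset (fun _ : Fin r => Y),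
        2 * (inner ℝ (v y) (∑ i, v (T i)) : ℝ) = 0 := by
      rw [Finset.sum_comm]
      refine Finset.sum_eq_zero fun T _ => ?_
      rw [← Finset.mul_sum, ← sum_inner, hv, inner_zero_left, mul_zero]
    have t3 : ∑ _y ∈ Y, ∑ T ∈ Fintype.piFinset (fun _ : Fin r => Y), ‖∑ i, v (T i)‖ ^ 2
        = (Y.card : ℝ) * (r * (Y.card : ℝ) ^ (r - 1) * ∑ y ∈ Y, ‖v y‖ ^ 2) := by
      rw [Finset.sum_const, ih, nsmul_eq_mul]
    rw [t1, t2, t3]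
    rcases r with _ | s
    · simp
    · have : (s + 1 : ℕ) - 1 = s := rfl
      rw [this]
      have h2 : (s + 1 + 1 : ℕ) - 1 = s + 1 := rfl
      rw [h2]
      push_cast
      ring
end Aux
section Markov
variable {X : Type*} [NormedAddCommGroup X] [InnerProductSpace ℝ X] [DecidableEq X]

lemma avg_mem_convexHull (Y : Finset X) {r : ℕ} (hr : 1 ≤ r) {T : Fin r → X}
    (hT : ∀ i, T i ∈ Y) : (r : ℝ)⁻¹ • ∑ i, T i ∈ convexHull ℝ (Y : Set X) := by
  have hr0 : (r : ℝ) ≠ 0 := by positivity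
  rw [Finset.smul_sum]
  refine (convex_convexHull ℝ _).sum_mem (fun i _ => by positivity) ?_
    (fun i _ => subset_convexHull ℝ _ (hT i))
  rw [Finset.sum_const, card_univ, Fintype.card_fin, nsmul_eq_mul]
  field_simp

lemma exists_good_center (P Y : Finset X) (hYP : Y ⊆ P) (hY : Y.Nonempty)
    (r : ℕ) (hr : 1 ≤ r) :
    ∃ c : X, Y.card ^ r ≤ 2 * ((Fintype.piFinset fun _ : Fin r => Y).filter
        (fun T => dist c ((r : ℝ)⁻¹ • ∑ i, T i) ≤
          Real.sqrt 2 * Metric.diam (P : Set X) / Real.sqrt r)).card := by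
  classical
  have hk : 0 < Y.card := Finset.card_pos.mpr hY
  have hk0 : (Y.card : ℝ) ≠ 0 := by positivity
  have hr0 : (0:ℝ) < r := by positivity
  set D := Metric.diam (P : Set X) with hDdef
  have hD0 : 0 ≤ D := Metric.diam_nonneg
  set ρ := Real.sqrt 2 * D / Real.sqrt r with hρdef
  set c : X := (Y.card : ℝ)⁻¹ • ∑ y ∈ Y, y with hcdef
  have hc : c ∈ convexHull ℝ (Y : Set X) := by
    rw [hcdef, Finset.smul_sum]
    refine (convex_convexHull ℝ _).sum_mem (fun i _ => by positivity) ?_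
      (fun i hi => subset_convexHull ℝ _ hi)
    rw [Finset.sum_const, nsmul_eq_mul]
    field_simp
  have hbY : Bornology.IsBounded (convexHull ℝ (Y : Set X)) :=
    isBounded_convexHull.mpr ((Y : Set X).toFinite.isBounded)
  have hdiamY : Metric.diam (convexHull ℝ (Y : Set X)) ≤ D := by
    rw [convexHull_diam]
    exact Metric.diam_mono hYP ((P : Set X).toFinite.isBounded)
  -- each point of Y is within D of c
  have hyc : ∀ y ∈ Y, ‖y - c‖ ≤ D := by
    intro y hy
    rw [← dist_eq_norm]
    exact (Metric.dist_le_diam_of_mem hbY (subset_convexHull ℝ _ hy) hc).trans hdiamY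
  have hv : ∑ y ∈ Y, (y - c) = 0 := by
    rw [Finset.sum_sub_distrib, Finset.sum_const, hcdef, ← Nat.cast_smul_eq_nsmul ℝ,
      smul_smul, mul_inv_cancel₀ hk0, one_smul, sub_self]
  have havg : ∀ T : Fin r → X, dist c ((r : ℝ)⁻¹ • ∑ i, T i)
      = (r : ℝ)⁻¹ * ‖∑ i, (T i - c)‖ := by
    intro T
    have h1 : ∑ i : Fin r, (T i - c) = (∑ i, T i) - (r : ℝ) • c := by
      rw [Finset.sum_sub_distrib, Finset.sum_const, card_univ, Fintype.card_fin,
        ← Nat.cast_smul_eq_nsmul ℝ]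
    have h2 : (r : ℝ)⁻¹ • ∑ i : Fin r, (T i - c) = ((r : ℝ)⁻¹ • ∑ i, T i) - c := by
      rw [h1, smul_sub, smul_smul, inv_mul_cancel₀ (ne_of_gt hr0), one_smul]
    rw [dist_eq_norm', ← h2, norm_smul]
    simp [Real.norm_eq_abs, abs_of_nonneg (inv_nonneg.mpr hr0.le)]
  have hV : ∑ y ∈ Y, ‖y - c‖ ^ 2 ≤ (Y.card : ℝ) * D ^ 2 := by
    calc ∑ y ∈ Y, ‖y - c‖ ^ 2 ≤ ∑ _y ∈ Y, D ^ 2 :=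
        Finset.sum_le_sum fun y hy => by
          have := hyc y hy
          nlinarith [norm_nonneg (y - c)]
      _ = (Y.card : ℝ) * D ^ 2 := by rw [Finset.sum_const, nsmul_eq_mul]
  have hQ : ∑ T ∈ Fintype.piFinset (fun _ : Fin r => Y), ‖∑ i, (T i - c)‖ ^ 2
      ≤ r * (Y.card : ℝ) ^ r * D ^ 2 := by
    rw [sum_norm_sq_piFinset Y (fun y => y - c) hv r]
    have h1 : (Y.card : ℝ) ^ (r - 1) * (Y.card : ℝ) = (Y.card : ℝ) ^ r := by
      conv_rhs => rw [show r = (r - 1) + 1 from (Nat.succ_pred_eq_of_pos (by omega)).symm]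
      rw [pow_succ]
    calc (r : ℝ) * (Y.card : ℝ) ^ (r - 1) * ∑ y ∈ Y, ‖y - c‖ ^ 2
        ≤ (r : ℝ) * (Y.card : ℝ) ^ (r - 1) * ((Y.card : ℝ) * D ^ 2) :=
          mul_le_mul_of_nonneg_left hV (by positivity)
      _ = r * (Y.card : ℝ) ^ r * D ^ 2 := by rw [← h1]; ring
  set G := (Fintype.piFinset fun _ : Fin r => Y).filter
      (fun T => dist c ((r : ℝ)⁻¹ • ∑ i, T i) ≤ ρ) with hGdef
  set B := (Fintype.piFinset fun _ : Fin r => Y).filter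
      (fun T => ¬ dist c ((r : ℝ)⁻¹ • ∑ i, T i) ≤ ρ) with hBdef
  have hGB : G.card + B.card = Y.card ^ r := by
    rw [hGdef, hBdef, Finset.card_filter_add_card_filter_not]
    simp [Fintype.card_piFinset]
  have hB : 2 * B.card ≤ Y.card ^ r := by
    rcases eq_or_lt_of_le hD0 with hD | hD
    · have hBempty : B = ∅ := by
        rw [Finset.eq_empty_iff_forall_notMem]
        intro T hT
        rw [hBdef, Finset.mem_filter] at hT
        refine hT.2 ?_
        have hTm : (r : ℝ)⁻¹ • ∑ i, T i ∈ convexHull ℝ (Y : Set X) :=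
          avg_mem_convexHull Y hr fun i => Fintype.mem_piFinset.mp hT.1 i
        have hd : dist c ((r : ℝ)⁻¹ • ∑ i, T i) ≤ D :=
          (Metric.dist_le_diam_of_mem hbY hc hTm).trans hdiamY
        have hρ0 : ρ = 0 := by rw [hρdef, ← hD]; ring
        rw [hρ0]
        exact hd.trans (le_of_eq hD.symm)
      rw [hBempty]
      simp
    · have hρpos : 0 ≤ ρ := by positivity
      have hρsq : ρ ^ 2 = 2 * D ^ 2 / r := by
        rw [hρdef, div_pow, mul_pow, Real.sq_sqrt (by norm_num : (2:ℝ) ≥ 0),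
          Real.sq_sqrt hr0.le]
      have hterm : ∀ T ∈ B, 2 * (r : ℝ) * D ^ 2 ≤ ‖∑ i, (T i - c)‖ ^ 2 := by
        intro T hT
        rw [hBdef, Finset.mem_filter] at hT
        have h1 : ρ < dist c ((r : ℝ)⁻¹ • ∑ i, T i) := lt_of_not_ge hT.2
        rw [havg T] at h1
        rw [inv_mul_eq_div, lt_div_iff₀ hr0] at h1
        have h2 : (r : ℝ) * ρ ≤ ‖∑ i, (T i - c)‖ := by linarith
        have h3 : ((r : ℝ) * ρ) ^ 2 = 2 * r * D ^ 2 := by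
          rw [mul_pow, hρsq]
          field_simp
        have h4 : ((r : ℝ) * ρ) ^ 2 ≤ ‖∑ i, (T i - c)‖ ^ 2 :=
          pow_le_pow_left₀ (mul_nonneg hr0.le hρpos) h2 2
        linarith
      have hsum1 : (B.card : ℝ) * (2 * (r : ℝ) * D ^ 2)
          ≤ ∑ T ∈ B, ‖∑ i, (T i - c)‖ ^ 2 := by
        have := Finset.card_nsmul_le_sum B (fun T : Fin r → X => ‖∑ i, (T i - c)‖ ^ 2)
          (2 * (r : ℝ) * D ^ 2) hterm
        simpa [nsmul_eq_mul] using this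
      have hsum2 : ∑ T ∈ B, ‖∑ i, (T i - c)‖ ^ 2
          ≤ ∑ T ∈ Fintype.piFinset (fun _ : Fin r => Y), ‖∑ i, (T i - c)‖ ^ 2 :=
        Finset.sum_le_sum_of_subset_of_nonneg (Finset.filter_subset _ _)
          (fun T _ _ => by positivity)
      have hfin : (B.card : ℝ) * (2 * (r : ℝ) * D ^ 2) ≤ (r : ℝ) * (Y.card : ℝ) ^ r * D ^ 2 :=
        le_trans hsum1 (le_trans hsum2 hQ)
      have : (2 * B.card : ℝ) ≤ (Y.card : ℝ) ^ r := by
        have hpos : 0 < (r : ℝ) * D ^ 2 := by positivity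
        rw [← mul_le_mul_iff_of_pos_right hpos]
        calc (2 * B.card : ℝ) * ((r : ℝ) * D ^ 2) = (B.card : ℝ) * (2 * (r : ℝ) * D ^ 2) := by
              ring
          _ ≤ (r : ℝ) * (Y.card : ℝ) ^ r * D ^ 2 := hfin
          _ = (Y.card : ℝ) ^ r * ((r : ℝ) * D ^ 2) := by ring
      exact_mod_cast this
  refine ⟨c, ?_⟩
  have hG2 : Y.card ^ r ≤ 2 * G.card := by omega
  exact hG2

end Markov
section Greedy
variable {X : Type*} [NormedAddCommGroup X] [InnerProductSpace ℝ X] [DecidableEq X]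

lemma greedy_cover (P : Finset X) (r m : ℕ) (ρ : ℝ) (hm : 1 ≤ m)
    (key : ∀ Y : Finset X, Y ⊆ P → m ≤ Y.card → ∃ c : X,
      Y.card ^ r ≤ 2 * ((Fintype.piFinset fun _ : Fin r => Y).filter
        (fun T => dist c ((r : ℝ)⁻¹ • ∑ i, T i) ≤ ρ)).card) :
    ∀ u : ℕ, ∀ U : Finset (Fin r → X), U.card ≤ u →
      ∃ F : Finset X, F.card * m ^ r ≤ 2 * U.card ∧
        ∀ Y : Finset X, Y ⊆ P → m ≤ Y.card →
          Fintype.piFinset (fun _ : Fin r => Y) ⊆ U →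
          ∃ f ∈ F, ∃ T ∈ Fintype.piFinset (fun _ : Fin r => Y),
            dist f ((r : ℝ)⁻¹ • ∑ i, T i) ≤ ρ := by
  intro u
  induction u with
  | zero =>
    intro U hU
    refine ⟨∅, by simp, ?_⟩
    intro Y hYP hYm hYU
    exfalso
    have hYne : Y.Nonempty := Finset.card_pos.mp (by omega)
    obtain ⟨T, hT⟩ := hYne.piFinset_const (ι := Fin r)
    have : T ∈ U := hYU hT
    have : U = ∅ := Finset.card_eq_zero.mp (by omega)
    simp_all
  | succ u ih =>
    intro U hU
    by_cases hbad : ∃ Y : Finset X, Y ⊆ P ∧ m ≤ Y.card ∧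
        Fintype.piFinset (fun _ : Fin r => Y) ⊆ U
    · obtain ⟨Y, hYP, hYm, hYU⟩ := hbad
      obtain ⟨c, hc⟩ := key Y hYP hYm
      set G := (Fintype.piFinset fun _ : Fin r => Y).filter
        (fun T => dist c ((r : ℝ)⁻¹ • ∑ i, T i) ≤ ρ) with hGdef
      have hGsub : G ⊆ U := (Finset.filter_subset _ _).trans hYU
      have hmr : 1 ≤ m ^ r := Nat.one_le_pow _ _ hm
      have hmY : m ^ r ≤ Y.card ^ r := Nat.pow_le_pow_left hYm r
      have hGpos : 1 ≤ G.card := by omega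
      have hsd : (U \ G).card + G.card = U.card := Finset.card_sdiff_add_card_eq_card hGsub
      obtain ⟨F', hF'card, hF'cov⟩ := ih (U \ G) (by omega)
      refine ⟨insert c F', ?_, ?_⟩
      · have h1 : (insert c F').card * m ^ r ≤ (F'.card + 1) * m ^ r :=
          Nat.mul_le_mul_right _ (Finset.card_insert_le _ _)
        have h2 : (F'.card + 1) * m ^ r = F'.card * m ^ r + m ^ r := by ring
        omega
      · intro Y₁ hY₁P hY₁m hY₁U
        by_cases hsub : Fintype.piFinset (fun _ : Fin r => Y₁) ⊆ U \ G
        · obtain ⟨f, hf, T, hT, hdT⟩ := hF'cov Y₁ hY₁P hY₁m hsub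
          exact ⟨f, Finset.mem_insert_of_mem hf, T, hT, hdT⟩
        · obtain ⟨T, hT, hTG⟩ := Finset.not_subset.mp hsub
          have hTU : T ∈ U := hY₁U hT
          have hTG' : T ∈ G := by
            by_contra h
            exact hTG (Finset.mem_sdiff.mpr ⟨hTU, h⟩)
          have := (Finset.mem_filter.mp hTG').2
          exact ⟨c, Finset.mem_insert_self _ _, T, hT, this⟩
    · refine ⟨∅, by simp, ?_⟩
      intro Y hYP hYm hYU
      exact absurd ⟨Y, hYP, hYm, hYU⟩ hbad

end Greedy

/-- No-dimension weak ε-net theorem in a real inner product space: for a set `P`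
of `n` points, `r ∈ [n]` and `ε > 0`, there is `F` with `|F| ≤ r^r ε^{−r}` such
that for every `Y ⊆ P` with `|Y| ≥ ε n`, the Minkowski sum of `F` with the ball
of radius `C r^{−1/2} diam P` meets `conv Y`, where `C = 2√2/(1 − 1/√2)`. -/
theorem nodim_weak_eps_net {X : Type*} [NormedAddCommGroup X] [InnerProductSpace ℝ X]
    (P : Finset X) (n : ℕ) (hn : n = P.card) (r : ℕ) (hr1 : 1 ≤ r) (hrn : r ≤ n)
    (ε : ℝ) (hε : 0 < ε) :
    ∃ F : Finset X, (F.card : ℝ) ≤ (r : ℝ) ^ r / ε ^ r ∧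
      ∀ Y ⊆ P, ε * n ≤ (Y.card : ℝ) →
        ∃ f ∈ F, ∃ y ∈ convexHull ℝ (Y : Set X),
          dist f y ≤ 2 * Real.sqrt 2 / (1 - 1 / Real.sqrt 2) / Real.sqrt r *
            Metric.diam (P : Set X) := by
  classical
  have hn1 : 1 ≤ n := le_trans hr1 hrn
  have hnR : (0:ℝ) < n := by exact_mod_cast Nat.lt_of_lt_of_le Nat.zero_lt_one hn1
  have hPb : Bornology.IsBounded (P : Set X) := (P : Set X).toFinite.isBounded
  set D := Metric.diam (P : Set X) with hDdef
  have hD0 : 0 ≤ D := Metric.diam_nonneg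
  have hs1 : (1:ℝ) < Real.sqrt 2 := by
    nlinarith [Real.sq_sqrt (by norm_num : (0:ℝ) ≤ 2), Real.sqrt_nonneg 2]
  have hden : 0 < 1 - 1 / Real.sqrt 2 := by
    have h : 1 / Real.sqrt 2 < 1 := by
      rw [div_lt_one (by positivity)]
      exact hs1
    linarith
  have h0 : Real.sqrt 2 * (1 / Real.sqrt 2) = 1 := by
    field_simp
  have hCs : Real.sqrt 2 ≤ 2 * Real.sqrt 2 / (1 - 1 / Real.sqrt 2) := by
    rw [le_div_iff₀ hden]
    nlinarith [Real.sqrt_nonneg 2]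
  have hεr : (0:ℝ) < ε ^ r := pow_pos hε r
  by_cases hε1 : 1 < ε
  · refine ⟨∅, ?_, ?_⟩
    · simp only [Finset.card_empty, Nat.cast_zero]
      positivity
    · intro Y hYP hYc
      exfalso
      have h1 : (Y.card : ℝ) ≤ n := by
        have := Finset.card_le_card hYP
        rw [← hn] at this
        exact_mod_cast this
      nlinarith
  push_neg at hε1
  by_cases hru : r = 1
  · subst hru
    obtain ⟨p, hp⟩ := Finset.card_pos.mp (show 0 < P.card by omega)
    refine ⟨{p}, ?_, ?_⟩
    · simp only [Finset.card_singleton, Nat.cast_one, pow_one]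
      rw [le_div_iff₀ hε]
      linarith
    · intro Y hYP hYc
      have hYne : Y.Nonempty := by
        rw [← Finset.card_pos]
        by_contra h
        push_neg at h
        have h0' : Y.card = 0 := by omega
        rw [h0'] at hYc
        push_cast at hYc
        nlinarith
      obtain ⟨y, hy⟩ := hYne
      refine ⟨p, Finset.mem_singleton_self p, y, subset_convexHull ℝ _ hy, ?_⟩
      have h1 : dist p y ≤ D := Metric.dist_le_diam_of_mem hPb hp (hYP hy)
      have h2 : Real.sqrt ((1:ℕ):ℝ) = 1 := by
        rw [Nat.cast_one, Real.sqrt_one]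
      rw [h2, div_one]
      calc dist p y ≤ D := h1
        _ ≤ 2 * Real.sqrt 2 / (1 - 1 / Real.sqrt 2) * D := by
            nlinarith
  · have hr2 : 2 ≤ r := by omega
    have hεn : (0:ℝ) < ε * n := by positivity
    set m := ⌈ε * n⌉₊ with hmdef
    have hm1 : 1 ≤ m := Nat.one_le_ceil_iff.mpr hεn
    have key : ∀ Y : Finset X, Y ⊆ P → m ≤ Y.card → ∃ c : X,
        Y.card ^ r ≤ 2 * ((Fintype.piFinset fun _ : Fin r => Y).filter
          (fun T => dist c ((r : ℝ)⁻¹ • ∑ i, T i) ≤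
            Real.sqrt 2 * D / Real.sqrt r)).card :=
      fun Y hYP hYm =>
        exists_good_center P Y hYP (Finset.card_pos.mp (by omega)) r hr1
    obtain ⟨F, hFcard, hFcov⟩ := greedy_cover P r m (Real.sqrt 2 * D / Real.sqrt r) hm1 key
      (Fintype.piFinset fun _ : Fin r => P).card _ le_rfl
    have hA : (Fintype.piFinset fun _ : Fin r => P).card = n ^ r := by
      simp [Fintype.card_piFinset, hn]
    rw [hA] at hFcard
    refine ⟨F, ?_, ?_⟩
    · have hmge : ε * n ≤ (m : ℝ) := Nat.le_ceil _
      have h1 : (ε * n) ^ r ≤ (m : ℝ) ^ r := pow_le_pow_left₀ hεn.le hmge r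
      have h2 : (F.card : ℝ) * (m : ℝ) ^ r ≤ 2 * (n : ℝ) ^ r := by exact_mod_cast hFcard
      have hc1 : (F.card : ℝ) * (ε * n) ^ r ≤ 2 * (n : ℝ) ^ r := by
        nlinarith [Nat.cast_nonneg (α := ℝ) F.card]
      have hnr : (0:ℝ) < (n : ℝ) ^ r := by positivity
      have hc2 : (F.card : ℝ) * ε ^ r ≤ 2 := by
        rw [mul_pow] at hc1
        have := (mul_le_mul_iff_of_pos_right hnr).mp (by linarith [hc1] : ((F.card : ℝ) * ε ^ r) * (n:ℝ)^r ≤ 2 * (n:ℝ)^r)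
        exact this
      rw [le_div_iff₀ hεr]
      have h3 : (2:ℝ) ≤ (r : ℝ) ^ r := by
        have : (2:ℕ) ≤ r ^ r := le_trans hr2 (Nat.le_self_pow (by omega) r)
        exact_mod_cast this
      linarith
    · intro Y hYP hYc
      have hYm : m ≤ Y.card := Nat.ceil_le.mpr hYc
      have hYsub : Fintype.piFinset (fun _ : Fin r => Y) ⊆ Fintype.piFinset (fun _ : Fin r => P) :=
        Fintype.piFinset_subset _ _ fun _ => hYP
      obtain ⟨f, hf, T, hT, hdT⟩ := hFcov Y hYP hYm hYsub
      refine ⟨f, hf, (r : ℝ)⁻¹ • ∑ i, T i,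
        avg_mem_convexHull Y hr1 (fun i => Fintype.mem_piFinset.mp hT i), ?_⟩
      refine hdT.trans ?_
      have hsr : 0 < Real.sqrt r := Real.sqrt_pos.mpr (by positivity)
      have e1 : 2 * Real.sqrt 2 / (1 - 1 / Real.sqrt 2) / Real.sqrt r * D
          = (2 * Real.sqrt 2 / (1 - 1 / Real.sqrt 2)) * (D / Real.sqrt r) := by ring
      have e2 : Real.sqrt 2 * D / Real.sqrt r = Real.sqrt 2 * (D / Real.sqrt r) := by ring
      rw [e1, e2]
      exact mul_le_mul_of_nonneg_right hCs (by positivity)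
end
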